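/- Let G be a group and (A,θ) a partial G-module, with S = E(A) ∗_θ G, α(e δ₁) = e, κ(e δ_x) = x. For each n ≥ 1, the map sending a partial n-cochain w ∈ Cⁿ(G,A) to f ∈ Cⁿ_≤(S¹,A¹) defined by f(s₁,…,sₙ) = α(s₁⋯sₙ sₙ⁻¹⋯s₁⁻¹) w(κ(s₁),…,κ(sₙ)) is an isomorphism of abelian groups Cⁿ(G,A) ≅ Cⁿ_≤(S¹,A¹), with inverse given by w(x₁,…,xₙ)a = f(s₁, s₁⁻¹s₂, …, s_{n-1}⁻¹ sₙ) a, where (s₁,…,sₙ) is the unique tuple in Sⁿ with κ(sᵢ) = x₁⋯xᵢ and α(sᵢ sᵢ⁻¹) = a a⁻¹. -/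

import Mathlib

/-- An inverse semigroup: every element has a unique (generalized) inverse. -/
class InverseSemigroup (S : Type*) extends Semigroup S, Inv S where
  mul_inv_mul : ∀ a : S, a * a⁻¹ * a = a
  inv_mul_inv : ∀ a : S, a⁻¹ * a * a⁻¹ = a⁻¹
  inv_unique : ∀ a b : S, a * b * a = a → b * a * b = b → b = a⁻¹

/-- `e` is an idempotent. -/
def IsIdem {S : Type*} [Mul S] (e : S) : Prop := e * e = e

/-- The natural partial order on an inverse semigroup: `a ≤ b` iff `a = e * b`
for some idempotent `e`. -/
def NatLe {S : Type*} [Mul S] (a b : S) : Prop := ∃ e, IsIdem e ∧ a = e * b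

/-- A partial action `θ` of a group `G` on an inverse semigroup `A`:
isomorphisms `θ_x : D_{x⁻¹} → D_x` between nonempty ideals with `D₁ = A`,
`θ₁ = id`, `θ_x(D_{x⁻¹} ∩ D_y) = D_x ∩ D_{xy}` and `θ_x ∘ θ_y ⊆ θ_{xy}`. -/
structure PAct (G A : Type*) [Group G] [InverseSemigroup A] where
  D : G → Set A
  θ : G → A → A
  D_nonempty : ∀ x : G, (D x).Nonempty
  D_ideal : ∀ x : G, ∀ s : A, ∀ a ∈ D x, s * a ∈ D x ∧ a * s ∈ D x
  D_one : D 1 = Set.univ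
  θ_one : ∀ a : A, θ 1 a = a
  θ_bij : ∀ x : G, Set.BijOn (θ x) (D x⁻¹) (D x)
  θ_mul : ∀ x : G, ∀ a ∈ D x⁻¹, ∀ b ∈ D x⁻¹, θ x (a * b) = θ x a * θ x b
  θ_range : ∀ x y : G, θ x '' (D x⁻¹ ∩ D y) = D x ∩ D (x * y)
  θ_comp : ∀ x y : G, ∀ a ∈ D y⁻¹ ∩ D (y⁻¹ * x⁻¹), θ x (θ y a) = θ (x * y) a

/-- Multiplication of the crossed product `E(A) ∗_θ G` (and of `A ∗_θ G`):
`aδ_x · bδ_y = θ_x(θ_{x⁻¹}(a) b) δ_{xy}`. -/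
def smul {G A : Type*} [Group G] [InverseSemigroup A] (P : PAct G A)
    (p q : A × G) : A × G :=
  (P.θ p.2 (P.θ p.2⁻¹ p.1 * q.1), p.2 * q.2)

/-- Inversion in the crossed product: `(aδ_x)⁻¹ = θ_{x⁻¹}(a⁻¹) δ_{x⁻¹}`
(for `a` idempotent, `a⁻¹ = a`). -/
def sinv {G A : Type*} [Group G] [InverseSemigroup A] (P : PAct G A)
    (p : A × G) : A × G :=
  (P.θ p.2⁻¹ p.1⁻¹, p.2⁻¹)

/-- Membership in `S = E(A) ∗_θ G`: pairs `eδ_x` with `e` an idempotent of `D_x`. -/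
def SC {G A : Type*} [Group G] [InverseSemigroup A] (P : PAct G A)
    (p : A × G) : Prop :=
  p.1 ∈ P.D p.2 ∧ IsIdem p.1

/-- The partial product `x₁ x₂ ⋯ x_k` of the first `k` entries of a tuple. -/
def pprodN {G : Type*} [Group G] {n : ℕ} (x : Fin n → G) (k : ℕ) : G :=
  ((List.ofFn x).take k).prod

/-- The ideal `D_{(x₁,…,xₙ)} = D_{x₁} D_{x₁x₂} ⋯ D_{x₁⋯xₙ}` (for an inverse
semigroup, the product of ideals is their intersection). -/
def Dn {G A : Type*} [Group G] [InverseSemigroup A] (P : PAct G A)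
    {n : ℕ} (x : Fin n → G) : Set A :=
  ⋂ i : Fin n, P.D (pprodN x (i + 1))

/-- The product `s₁ s₂ ⋯ sₙ` in the crossed product `E(A) ∗_θ G`. -/
def sprod {G A : Type*} [Group G] [InverseSemigroup A] (P : PAct G A)
    {n : ℕ} (hn : 0 < n) (s : Fin n → A × G) : A × G :=
  ((List.ofFn s).tail).foldl (smul P) (s ⟨0, hn⟩)

/-- The tuple `(s₁, s₁⁻¹s₂, …, s_{n-1}⁻¹ sₙ)` where `sᵢ = a a⁻¹ δ_{x₁⋯xᵢ}`. -/
def tup {G A : Type*} [Group G] [InverseSemigroup A] (P : PAct G A)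
    {n : ℕ} (x : Fin n → G) (a : A) : Fin n → A × G :=
  fun i => smul P (sinv P (a * a⁻¹, pprodN x (i : ℕ)))
    (a * a⁻¹, pprodN x ((i : ℕ) + 1))

/-- `(wl, wr, wil, wir)` is a partial `n`-cochain: for each `x : Gⁿ` the pair
`(wl x, wr x)` is a multiplier of the ideal `D_{(x₁,…,xₙ)}` with inverse
multiplier `(wil x, wir x)`. -/
def IsPC {G A : Type*} [Group G] [InverseSemigroup A] (P : PAct G A)
    {n : ℕ} (wl wr wil wir : (Fin n → G) → A → A) : Prop :=
  ∀ x : Fin n → G,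
    (∀ a ∈ Dn P x, wl x a ∈ Dn P x ∧ wr x a ∈ Dn P x ∧
      wil x a ∈ Dn P x ∧ wir x a ∈ Dn P x) ∧
    (∀ a ∈ Dn P x, ∀ b ∈ Dn P x,
      wl x (a * b) = wl x a * b ∧ wr x (a * b) = a * wr x b ∧
      a * wl x b = wr x a * b ∧
      wil x (a * b) = wil x a * b ∧ wir x (a * b) = a * wir x b ∧
      a * wil x b = wir x a * b) ∧
    (∀ a ∈ Dn P x, wl x (wil x a) = a ∧ wil x (wl x a) = a ∧
      wr x (wir x a) = a ∧ wir x (wr x a) = a)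

/-- The natural partial order on `S = E(A) ∗_θ G`. -/
def SNatLe {G A : Type*} [Group G] [InverseSemigroup A] (P : PAct G A)
    (p q : A × G) : Prop :=
  ∃ r : A × G, SC P r ∧ smul P r r = r ∧ p = smul P r q

/-- `f` belongs to `Cⁿ_≤(S¹,A¹)`: it takes tuples of elements of
`S = E(A) ∗_θ G` to elements of the component
`A_{α(s₁⋯sₙ sₙ⁻¹⋯s₁⁻¹)}` and is order-preserving. -/
def IsOC {G A : Type*} [Group G] [InverseSemigroup A] (P : PAct G A)
    {n : ℕ} (hn : 0 < n) (f : (Fin n → A × G) → A) : Prop :=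
  ∀ s : Fin n → A × G, (∀ i, SC P (s i)) →
    f s * (f s)⁻¹ = (smul P (sprod P hn s) (sinv P (sprod P hn s))).1 ∧
    (∀ t : Fin n → A × G, (∀ i, SC P (t i)) → (∀ i, SNatLe P (s i) (t i)) →
      NatLe (f s) (f t))

section Aux
variable {G A : Type*} [Group G] [InverseSemigroup A]

open InverseSemigroup

theorem inv_invA (a : A) : a⁻¹⁻¹ = a :=
  (inv_unique a⁻¹ a (inv_mul_inv a) (mul_inv_mul a)).symm

theorem idem_invA {e : A} (he : IsIdem e) : e⁻¹ = e := by
  have : e * e * e = e := by rw [he, he]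
  exact (inv_unique e e this this).symm

theorem mul_invA (hA : ∀ a b : A, a * b = b * a) (a b : A) : (a*b)⁻¹ = a⁻¹ * b⁻¹ := by
  letI : Std.Commutative (α := A) (·*·) := ⟨hA⟩
  letI : Std.Associative (α := A) (·*·) := ⟨mul_assoc⟩
  have h1 : (a*b) * (a⁻¹*b⁻¹) * (a*b) = a*b := by
    have : (a*b) * (a⁻¹*b⁻¹) * (a*b) = (a*a⁻¹*a) * (b*b⁻¹*b) := by ac_rfl
    rw [this, mul_inv_mul, mul_inv_mul]
  have h2 : (a⁻¹*b⁻¹) * (a*b) * (a⁻¹*b⁻¹) = a⁻¹*b⁻¹ := by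
    have : (a⁻¹*b⁻¹) * (a*b) * (a⁻¹*b⁻¹) = (a⁻¹*a*a⁻¹) * (b⁻¹*b*b⁻¹) := by ac_rfl
    rw [this, inv_mul_inv, inv_mul_inv]
  exact (inv_unique _ _ h1 h2).symm

theorem idem_mulA (hA : ∀ a b : A, a * b = b * a) {e f : A} (he : IsIdem e) (hf : IsIdem f) :
    IsIdem (e * f) := by
  letI : Std.Commutative (α := A) (·*·) := ⟨hA⟩
  letI : Std.Associative (α := A) (·*·) := ⟨mul_assoc⟩
  show e * f * (e * f) = e * f
  have : e * f * (e * f) = (e*e) * (f*f) := by ac_rfl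
  rw [this, he, hf]

theorem idem_mul_inv (a : A) : IsIdem (a * a⁻¹) := by
  show a * a⁻¹ * (a * a⁻¹) = a * a⁻¹
  rw [← mul_assoc, InverseSemigroup.mul_inv_mul]

/-! θ lemmas -/

theorem thetaD (P : PAct G A) {x : G} {a : A} (ha : a ∈ P.D x⁻¹) : P.θ x a ∈ P.D x :=
  (P.θ_bij x).mapsTo ha

theorem thetaD' (P : PAct G A) {x : G} {a : A} (ha : a ∈ P.D x) : P.θ x⁻¹ a ∈ P.D x⁻¹ :=
  (P.θ_bij x⁻¹).mapsTo (by rwa [inv_inv])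

theorem theta_thetaInv (P : PAct G A) {x : G} {a : A} (ha : a ∈ P.D x) :
    P.θ x (P.θ x⁻¹ a) = a := by
  have := P.θ_comp x x⁻¹ a ⟨by rwa [inv_inv], by simp [P.D_one]⟩
  rwa [mul_inv_cancel, P.θ_one] at this

theorem thetaInv_theta (P : PAct G A) {x : G} {a : A} (ha : a ∈ P.D x⁻¹) :
    P.θ x⁻¹ (P.θ x a) = a := by
  have := P.θ_comp x⁻¹ x a ⟨ha, by simp [P.D_one]⟩
  rwa [inv_mul_cancel, P.θ_one] at this

theorem theta_idem (P : PAct G A) {x : G} {a : A} (ha : a ∈ P.D x⁻¹) (h : IsIdem a) :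
    IsIdem (P.θ x a) := by
  show P.θ x a * P.θ x a = P.θ x a
  rw [← P.θ_mul x a ha a ha, h]

theorem theta_mem_inter (P : PAct G A) {x y : G} {a : A} (h1 : a ∈ P.D x⁻¹) (h2 : a ∈ P.D y) :
    P.θ x a ∈ P.D x ∩ P.D (x * y) := by
  rw [← P.θ_range x y]
  exact Set.mem_image_of_mem _ ⟨h1, h2⟩

end Aux
section Aux2
variable {G A : Type*} [Group G] [InverseSemigroup A]

open InverseSemigroup

theorem smul_fst_mem (P : PAct G A) {p q : A × G}
    (hp : SC P p) (hq : SC P q) : (smul P p q).1 ∈ P.D p.2 ∩ P.D (p.2 * q.2) := by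
  apply theta_mem_inter
  · exact (P.D_ideal p.2⁻¹ _ _ (thetaD' P hp.1)).2
  · exact (P.D_ideal q.2 _ _ hq.1).1

theorem smul_SC (hA : ∀ a b : A, a * b = b * a) (P : PAct G A) {p q : A × G}
    (hp : SC P p) (hq : SC P q) : SC P (smul P p q) := by
  refine ⟨(smul_fst_mem P hp hq).2, ?_⟩
  have hu : P.θ p.2⁻¹ p.1 ∈ P.D p.2⁻¹ := thetaD' P hp.1
  apply theta_idem
  · exact (P.D_ideal p.2⁻¹ _ _ hu).2
  · exact idem_mulA hA (theta_idem P (by rw [inv_inv]; exact hp.1) hp.2) hq.2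

theorem smul_absorb (hA : ∀ a b : A, a * b = b * a) (P : PAct G A) {p q : A × G}
    (hp : SC P p) (hq : SC P q) : (smul P p q).1 = p.1 * (smul P p q).1 := by
  have hu : P.θ p.2⁻¹ p.1 ∈ P.D p.2⁻¹ := thetaD' P hp.1
  have huq : P.θ p.2⁻¹ p.1 * q.1 ∈ P.D p.2⁻¹ := (P.D_ideal p.2⁻¹ _ _ hu).2
  have hidem : IsIdem (P.θ p.2⁻¹ p.1) := theta_idem P (by rw [inv_inv]; exact hp.1) hp.2
  show P.θ p.2 (P.θ p.2⁻¹ p.1 * q.1) = p.1 * P.θ p.2 (P.θ p.2⁻¹ p.1 * q.1)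
  conv_lhs => rw [show P.θ p.2⁻¹ p.1 * q.1 = P.θ p.2⁻¹ p.1 * (P.θ p.2⁻¹ p.1 * q.1) by
    rw [← mul_assoc, hidem]]
  rw [P.θ_mul p.2 _ hu _ huq, theta_thetaInv P hp.1]

/-- Step lemma for the order relation. -/
theorem smul_R (hA : ∀ a b : A, a * b = b * a) (P : PAct G A) {p p' q q' : A × G}
    (hp : SC P p) (hp' : SC P p') (hq : SC P q) (hq' : SC P q')
    (h2 : p.2 = q.2) (h1 : p.1 = p.1 * q.1)
    (h2' : p'.2 = q'.2) (h1' : p'.1 = p'.1 * q'.1) :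
    (smul P p p').2 = (smul P q q').2 ∧ (smul P p p').1 = (smul P p p').1 * (smul P q q').1 := by
  letI : Std.Commutative (α := A) (·*·) := ⟨hA⟩
  letI : Std.Associative (α := A) (·*·) := ⟨mul_assoc⟩
  constructor
  · show p.2 * p'.2 = q.2 * q'.2; rw [h2, h2']
  · show P.θ p.2 (P.θ p.2⁻¹ p.1 * p'.1)
        = P.θ p.2 (P.θ p.2⁻¹ p.1 * p'.1) * P.θ q.2 (P.θ q.2⁻¹ q.1 * q'.1)
    rw [h2]
    set w := P.θ q.2⁻¹ p.1 * p'.1 with hw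
    set u := P.θ q.2⁻¹ q.1 * q'.1 with hu
    have hpD : p.1 ∈ P.D q.2 := h2 ▸ hp.1
    have hwD : w ∈ P.D q.2⁻¹ := (P.D_ideal q.2⁻¹ _ _ (thetaD' P hpD)).2
    have huD : u ∈ P.D q.2⁻¹ := (P.D_ideal q.2⁻¹ _ _ (thetaD' P hq.1)).2
    have hwu : w = w * u := by
      rw [hw, hu]
      have : P.θ q.2⁻¹ p.1 * p'.1 * (P.θ q.2⁻¹ q.1 * q'.1)
          = (P.θ q.2⁻¹ p.1 * P.θ q.2⁻¹ q.1) * (p'.1 * q'.1) := by ac_rfl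
      rw [this, ← P.θ_mul q.2⁻¹ _ (by rw [inv_inv]; exact hpD) _ (by rw [inv_inv]; exact hq.1),
        ← h1, ← h1']
    conv_lhs => rw [hwu]
    rw [P.θ_mul q.2 w hwD u huD]

theorem smul_one_left (P : PAct G A) (c : A) (q : A × G) :
    smul P (c, (1:G)) q = (c * q.1, q.2) := by
  simp [smul, P.θ_one, inv_one]

theorem smul_sinv_self (hA : ∀ a b : A, a * b = b * a) (P : PAct G A) {p : A × G}
    (hp : SC P p) : smul P p (sinv P p) = (p.1, 1) := by
  have hidem : IsIdem (P.θ p.2⁻¹ p.1) := theta_idem P (by rw [inv_inv]; exact hp.1) hp.2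
  show (P.θ p.2 (P.θ p.2⁻¹ p.1 * P.θ p.2⁻¹ p.1⁻¹), p.2 * p.2⁻¹) = (p.1, 1)
  rw [idem_invA hp.2, hidem, theta_thetaInv P hp.1, mul_inv_cancel]

end Aux2
section Aux3
variable {G A : Type*} [Group G] [InverseSemigroup A]

open InverseSemigroup

/-- Fold of the crossed-product multiplication over a list. -/
def lfold (P : PAct G A) (a : A × G) (l : List (A × G)) : A × G := l.foldl (smul P) a

theorem lfold_nil (P : PAct G A) (a : A × G) : lfold P a [] = a := rfl

theorem lfold_cons (P : PAct G A) (a q : A × G) (l : List (A × G)) :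
    lfold P a (q :: l) = lfold P (smul P a q) l := rfl

theorem lfold_append (P : PAct G A) (a : A × G) (l l' : List (A × G)) :
    lfold P a (l ++ l') = lfold P (lfold P a l) l' := List.foldl_append

theorem lfold_snd (P : PAct G A) (a : A × G) (l : List (A × G)) :
    (lfold P a l).2 = a.2 * (l.map Prod.snd).prod := by
  induction l generalizing a with
  | nil => simp [lfold_nil]
  | cons q l ih =>
    rw [lfold_cons, ih]
    show a.2 * q.2 * (l.map Prod.snd).prod = _
    simp [mul_assoc]

theorem lfold_SC (hA : ∀ a b : A, a * b = b * a) (P : PAct G A) {a : A × G} {l : List (A × G)}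
    (ha : SC P a) (hl : ∀ p ∈ l, SC P p) : SC P (lfold P a l) := by
  induction l generalizing a with
  | nil => exact ha
  | cons q l ih =>
    rw [lfold_cons]
    exact ih (smul_SC hA P ha (hl q (by simp))) (fun p hp => hl p (by simp [hp]))

theorem lfold_absorb (hA : ∀ a b : A, a * b = b * a) (P : PAct G A) {a : A × G} {l : List (A × G)}
    (ha : SC P a) (hl : ∀ p ∈ l, SC P p) : (lfold P a l).1 = a.1 * (lfold P a l).1 := by
  induction l generalizing a with
  | nil => exact ha.2.symm
  | cons q l ih =>
    rw [lfold_cons]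
    have hq : SC P q := hl q (by simp)
    have h1 := ih (smul_SC hA P ha hq) (fun p hp => hl p (by simp [hp]))
    rw [h1]
    conv_lhs => rw [smul_absorb hA P ha hq]
    rw [mul_assoc]

theorem lfold_R (hA : ∀ a b : A, a * b = b * a) (P : PAct G A) {a b : A × G}
    {l l' : List (A × G)}
    (ha : SC P a) (hb : SC P b) (h2 : a.2 = b.2) (h1 : a.1 = a.1 * b.1)
    (h : List.Forall₂ (fun p q => SC P p ∧ SC P q ∧ p.2 = q.2 ∧ p.1 = p.1 * q.1) l l') :
    (lfold P a l).2 = (lfold P b l').2 ∧ (lfold P a l).1 = (lfold P a l).1 * (lfold P b l').1 := by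
  induction h generalizing a b with
  | nil => exact ⟨h2, h1⟩
  | cons hpq hl ih =>
    rename_i p q l l' _
    obtain ⟨hp, hq, hpq2, hpq1⟩ := hpq
    rw [lfold_cons, lfold_cons]
    have step := smul_R hA P ha hp hb hq h2 h1 hpq2 hpq1
    exact ih (smul_SC hA P ha hp) (smul_SC hA P hb hq) step.1 step.2

end Aux3
section Aux4
variable {G A : Type*} [Group G] [InverseSemigroup A]

open InverseSemigroup

theorem pprodN_zero {n : ℕ} (x : Fin n → G) : pprodN x 0 = 1 := rfl

theorem pprodN_succ {n : ℕ} (x : Fin n → G) {k : ℕ} (h : k < n) :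
    pprodN x (k + 1) = pprodN x k * x ⟨k, h⟩ := by
  unfold pprodN
  rw [List.prod_take_succ _ k (by simpa using h), List.getElem_ofFn]

theorem pprodN_stable {n : ℕ} (x : Fin n → G) {k : ℕ} (h : n ≤ k) :
    pprodN x k = pprodN x n := by
  unfold pprodN
  rw [List.take_of_length_le (by simpa using h), List.take_of_length_le (by simp)]

/-- `a a⁻¹` lies in every `D (pprodN x j)` when `a ∈ Dn P x`. -/
theorem mem_pprod_of_Dn (P : PAct G A) {n : ℕ} {x : Fin n → G} {a : A}
    (ha : a ∈ Dn P x) (j : ℕ) : a * a⁻¹ ∈ P.D (pprodN x j) := by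
  match j with
  | 0 => rw [pprodN_zero, P.D_one]; trivial
  | k + 1 =>
    rcases lt_or_ge k n with h | h
    · have := Set.mem_iInter.1 ha ⟨k, h⟩
      exact (P.D_ideal _ a⁻¹ a this).2
    · rcases Nat.eq_zero_or_pos n with h0 | hn
      · subst h0
        have h1 : pprodN x (k + 1) = 1 := by simp [pprodN]
        rw [h1, P.D_one]; trivial
      rw [pprodN_stable x (by omega)]
      have := Set.mem_iInter.1 ha ⟨n - 1, by omega⟩
      have he : (n - 1 : ℕ) + 1 = n := by omega
      rw [he] at this
      exact (P.D_ideal _ a⁻¹ a this).2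

theorem tup_apply (hA : ∀ a b : A, a * b = b * a) (P : PAct G A) {n : ℕ} {x : Fin n → G} {a : A}
    (ha : a ∈ Dn P x) (i : Fin n) :
    tup P x a i = (P.θ (pprodN x i)⁻¹ (a * a⁻¹),
      (pprodN x (i : ℕ))⁻¹ * pprodN x ((i : ℕ) + 1)) := by
  have he : a * a⁻¹ ∈ P.D (pprodN x i) := mem_pprod_of_Dn P ha i
  have hidem : IsIdem (P.θ (pprodN x i)⁻¹ (a * a⁻¹)) :=
    theta_idem P (by rw [inv_inv]; exact he) (idem_mul_inv a)
  show (P.θ (pprodN x i)⁻¹ (P.θ (pprodN x i)⁻¹⁻¹ (P.θ (pprodN x i)⁻¹ (a * a⁻¹)⁻¹) * (a * a⁻¹)),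
      (pprodN x (i : ℕ))⁻¹ * pprodN x ((i : ℕ) + 1)) = _
  rw [idem_invA (idem_mul_inv a), inv_inv, theta_thetaInv P he, idem_mul_inv a]

theorem tup_snd (P : PAct G A) {n : ℕ} (x : Fin n → G) (a : A) (i : Fin n) :
    (tup P x a i).2 = x i := by
  show (pprodN x (i : ℕ))⁻¹ * pprodN x ((i : ℕ) + 1) = x i
  rw [pprodN_succ x i.isLt, inv_mul_cancel_left, Fin.eta]

theorem tup_SC (hA : ∀ a b : A, a * b = b * a) (P : PAct G A) {n : ℕ} {x : Fin n → G} {a : A}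
    (ha : a ∈ Dn P x) (i : Fin n) : SC P (tup P x a i) := by
  rw [tup_apply hA P ha i]
  constructor
  · exact (theta_mem_inter P (by rw [inv_inv]; exact mem_pprod_of_Dn P ha i)
      (mem_pprod_of_Dn P ha ((i : ℕ) + 1))).2
  · exact theta_idem P (by rw [inv_inv]; exact mem_pprod_of_Dn P ha i) (idem_mul_inv a)

theorem sprod_tup (hA : ∀ a b : A, a * b = b * a) (P : PAct G A) {m : ℕ} (hn : 0 < m + 1)
    {x : Fin (m + 1) → G} {a : A} (ha : a ∈ Dn P x) :
    sprod P hn (tup P x a) = (a * a⁻¹, pprodN x (m + 1)) := by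
  have hofn : List.ofFn (tup P x a) = tup P x a 0 ::
      List.ofFn (fun i : Fin m => tup P x a i.succ) := List.ofFn_succ
  have hsp : sprod P hn (tup P x a)
      = lfold P (tup P x a 0) (List.ofFn (fun i : Fin m => tup P x a i.succ)) := by
    show List.foldl (smul P) _ _ = _
    rw [hofn]
    rfl
  set l := List.ofFn (fun i : Fin m => tup P x a i.succ) with hl
  have key : ∀ k : ℕ, k ≤ m → lfold P (tup P x a 0) (l.take k) = (a * a⁻¹, pprodN x (k + 1)) := by
    intro k
    induction k with
    | zero =>
      intro _
      rw [List.take_zero, lfold_nil, tup_apply hA P ha 0]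
      show (P.θ (pprodN x ((0 : Fin (m+1)) : ℕ))⁻¹ _, (pprodN x ((0 : Fin (m+1)) : ℕ))⁻¹ * _) = _
      simp only [Fin.val_zero, pprodN_zero, inv_one, P.θ_one, one_mul]
    | succ k ih =>
      intro hk
      have hkm : k < m := by omega
      rw [List.take_succ]
      have hget : l[k]? = some (tup P x a (Fin.succ ⟨k, hkm⟩)) := by
        rw [hl, List.getElem?_ofFn]
        simp [List.ofFnNthVal, hkm]
      rw [hget]
      simp only [Option.toList_some]
      rw [lfold_append, ih (by omega)]
      show lfold P (smul P _ _) [] = _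
      rw [lfold_nil, tup_apply hA P ha]
      have hcoe : ((Fin.succ ⟨k, hkm⟩ : Fin (m+1)) : ℕ) = k + 1 := rfl
      rw [hcoe]
      have he : a * a⁻¹ ∈ P.D (pprodN x (k + 1)) := mem_pprod_of_Dn P ha (k + 1)
      have hidem : IsIdem (P.θ (pprodN x (k+1))⁻¹ (a * a⁻¹)) :=
        theta_idem P (by rw [inv_inv]; exact he) (idem_mul_inv a)
      show (P.θ (pprodN x (k+1)) (P.θ (pprodN x (k+1))⁻¹ (a * a⁻¹) *
          P.θ (pprodN x (k+1))⁻¹ (a * a⁻¹)), pprodN x (k+1) * ((pprodN x (k+1))⁻¹ * pprodN x (k+2)))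
          = (a * a⁻¹, pprodN x (k+2))
      rw [hidem, theta_thetaInv P he, mul_inv_cancel_left]
  rw [hsp, ← List.take_of_length_le (show l.length ≤ m by simp [hl]), key m le_rfl]

end Aux4
section Aux5
variable {G A : Type*} [Group G] [InverseSemigroup A]

open InverseSemigroup

theorem sprod_spec (hA : ∀ a b : A, a * b = b * a) (P : PAct G A) {m : ℕ} (hn : 0 < m + 1)
    (s : Fin (m + 1) → A × G) (hs : ∀ i, SC P (s i)) :
    SC P (sprod P hn s) ∧
    (∀ k : ℕ, (lfold P (s 0) ((List.ofFn (fun i : Fin m => s i.succ)).take k)).2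
        = pprodN (fun i => (s i).2) (k + 1)) ∧
    (sprod P hn s).2 = pprodN (fun i => (s i).2) (m + 1) ∧
    (∀ k : ℕ, (sprod P hn s).1
        = (lfold P (s 0) ((List.ofFn (fun i : Fin m => s i.succ)).take k)).1 * (sprod P hn s).1) ∧
    (sprod P hn s).1 ∈ Dn P (fun i => (s i).2) := by
  set x : Fin (m+1) → G := fun i => (s i).2 with hxdef
  set l := List.ofFn (fun i : Fin m => s i.succ) with hl
  have hsp : sprod P hn s = lfold P (s 0) l := by
    show List.foldl (smul P) _ _ = _
    rw [List.ofFn_succ (f := s)]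
    rfl
  have hlSC : ∀ p ∈ l, SC P p := by
    intro p hp
    rw [hl, List.mem_ofFn] at hp
    obtain ⟨i, rfl⟩ := hp
    exact hs _
  have htakeSC : ∀ k, ∀ p ∈ l.take k, SC P p := fun k p hp => hlSC p (List.mem_of_mem_take hp)
  have hSC : SC P (sprod P hn s) := by
    rw [hsp]; exact lfold_SC hA P (hs 0) hlSC
  have hsnd : ∀ k : ℕ, (lfold P (s 0) (l.take k)).2 = pprodN x (k + 1) := by
    intro k
    rw [lfold_snd]
    have hx : List.ofFn x = (s 0).2 :: List.ofFn (fun i : Fin m => (s i.succ).2) :=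
      List.ofFn_succ
    show (s 0).2 * ((l.take k).map Prod.snd).prod = ((List.ofFn x).take (k+1)).prod
    rw [hx, List.take_succ_cons, List.prod_cons, List.map_take, hl, List.map_ofFn]
    rfl
  have habs : ∀ k : ℕ, (sprod P hn s).1 = (lfold P (s 0) (l.take k)).1 * (sprod P hn s).1 := by
    intro k
    have hq : SC P (lfold P (s 0) (l.take k)) := lfold_SC hA P (hs 0) (htakeSC k)
    have hsplit : sprod P hn s = lfold P (lfold P (s 0) (l.take k)) (l.drop k) := by
      rw [hsp]
      conv_lhs => rw [← List.take_append_drop k l]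
      rw [lfold_append]
    rw [hsplit]
    exact lfold_absorb hA P hq (fun p hp => hlSC p (List.mem_of_mem_drop hp))
  refine ⟨hSC, hsnd, by rw [← hsnd m, hsp, List.take_of_length_le (by simp [hl])], habs, ?_⟩
  apply Set.mem_iInter.2
  intro i
  have hq : SC P (lfold P (s 0) (l.take (i : ℕ))) := lfold_SC hA P (hs 0) (htakeSC _)
  have h1 := hq.1
  rw [hsnd (i : ℕ)] at h1
  rw [habs (i : ℕ)]
  exact (P.D_ideal _ _ _ h1).2
end Aux5
section Aux6
variable {G A : Type*} [Group G] [InverseSemigroup A]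

open InverseSemigroup

theorem sprod_absorb_at (hA : ∀ a b : A, a * b = b * a) (P : PAct G A) {m : ℕ} (hn : 0 < m + 1)
    (s : Fin (m + 1) → A × G) (hs : ∀ i, SC P (s i)) (i : Fin (m + 1)) :
    P.θ (pprodN (fun j => (s j).2) (i : ℕ))⁻¹ ((sprod P hn s).1) * (s i).1
      = P.θ (pprodN (fun j => (s j).2) (i : ℕ))⁻¹ ((sprod P hn s).1) := by
  letI : Std.Commutative (α := A) (·*·) := ⟨hA⟩
  letI : Std.Associative (α := A) (·*·) := ⟨mul_assoc⟩
  obtain ⟨hSC, hsnd, _, habs, hDn⟩ := sprod_spec hA P hn s hs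
  set x : Fin (m+1) → G := fun j => (s j).2 with hxdef
  set l := List.ofFn (fun i : Fin m => s i.succ) with hl
  set a := (sprod P hn s).1 with hadef
  have haidem : IsIdem a := hSC.2
  have haa : a * a⁻¹ = a := by rw [idem_invA haidem, haidem]
  have haD : ∀ j : ℕ, a ∈ P.D (pprodN x j) := by
    intro j
    have := mem_pprod_of_Dn P hDn j
    rwa [haa] at this
  have he : IsIdem (s i).1 := (hs i).2
  obtain ⟨k, hk⟩ : ∃ k : ℕ, (i : ℕ) = k := ⟨i, rfl⟩
  rw [hk]
  match k, (hk ▸ i.isLt : k < m + 1) with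
  | 0, _ =>
    rw [pprodN_zero, inv_one, P.θ_one]
    have h0 : a = (s 0).1 * a := by
      have := habs 0
      rwa [List.take_zero, lfold_nil] at this
    have hi0 : i = 0 := Fin.ext hk
    rw [hi0]
    conv_lhs => rw [h0]
    have : (s 0).1 * a * (s 0).1 = (s 0).1 * (s 0).1 * a := by ac_rfl
    rw [this, (hs 0).2]
    exact h0.symm
  | k + 1, hklt =>
    have hkm : k < m := by omega
    have hi : i = Fin.succ ⟨k, hkm⟩ := Fin.ext (by simpa using hk)
    set Y := pprodN x (k + 1) with hY
    set q := lfold P (s 0) (l.take k) with hq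
    have hqSC : SC P q := lfold_SC hA P (hs 0)
      (fun p hp => by
        obtain ⟨j, rfl⟩ := List.mem_ofFn.1 (List.mem_of_mem_take hp)
        exact hs _)
    have hq2 : q.2 = Y := hsnd k
    have hstep : lfold P (s 0) (l.take (k+1)) = smul P q (s (Fin.succ ⟨k, hkm⟩)) := by
      rw [List.take_succ]
      have hget : l[k]? = some (s (Fin.succ ⟨k, hkm⟩)) := by
        rw [hl, List.getElem?_ofFn]
        simp [List.ofFnNthVal, hkm]
      rw [hget, Option.toList_some, lfold_append, ← hq]
      rfl
    set e := (s (Fin.succ ⟨k, hkm⟩)).1 with hedef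
    have heidem : IsIdem e := (hs _).2
    set u := P.θ Y⁻¹ q.1 with hu
    have huD : u ∈ P.D Y⁻¹ := by
      rw [hu, ← hq2]; exact thetaD' P hqSC.1
    have hvD : u * e ∈ P.D Y⁻¹ := (P.D_ideal _ _ _ huD).2
    have hQ : (lfold P (s 0) (l.take (k+1))).1 = P.θ Y (u * e) := by
      rw [hstep]
      show P.θ q.2 (P.θ q.2⁻¹ q.1 * e) = _
      rw [hq2, ← hu]
    have hQD : P.θ Y (u * e) ∈ P.D Y := thetaD P hvD
    have habs' : a = P.θ Y (u * e) * a := by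
      have := habs (k + 1)
      rwa [hQ] at this
    have hkey : P.θ Y⁻¹ a = (u * e) * P.θ Y⁻¹ a := by
      conv_lhs => rw [habs']
      rw [P.θ_mul Y⁻¹ _ (by rw [inv_inv]; exact hQD) _ (by rw [inv_inv]; exact haD (k+1)),
        thetaInv_theta P hvD]
    set t := P.θ Y⁻¹ a with ht
    rw [hi]
    show t * e = t
    conv_lhs => rw [hkey]
    have h5 : u * e * t * e = u * (e * e) * t := by ac_rfl
    rw [h5, heidem]
    exact hkey.symm

theorem tup_le (hA : ∀ a b : A, a * b = b * a) (P : PAct G A) {m : ℕ} (hn : 0 < m + 1)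
    (s : Fin (m + 1) → A × G) (hs : ∀ i, SC P (s i)) (i : Fin (m + 1)) :
    SNatLe P (tup P (fun j => (s j).2) ((sprod P hn s).1) i) (s i) := by
  obtain ⟨hSC, _, _, _, hDn⟩ := sprod_spec hA P hn s hs
  set x : Fin (m+1) → G := fun j => (s j).2 with hxdef
  set a := (sprod P hn s).1 with hadef
  have haidem : IsIdem a := hSC.2
  have haa : a * a⁻¹ = a := by rw [idem_invA haidem, haidem]
  have haD : ∀ j : ℕ, a ∈ P.D (pprodN x j) := by
    intro j; have := mem_pprod_of_Dn P hDn j; rwa [haa] at this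
  refine ⟨(P.θ (pprodN x (i : ℕ))⁻¹ a, 1), ⟨by rw [P.D_one]; trivial, ?_⟩, ?_, ?_⟩
  · exact theta_idem P (by rw [inv_inv]; exact haD _) haidem
  · rw [smul_one_left]
    have : IsIdem (P.θ (pprodN x (i : ℕ))⁻¹ a) :=
      theta_idem P (by rw [inv_inv]; exact haD _) haidem
    rw [this]
  · rw [smul_one_left, tup_apply hA P hDn i, haa]
    refine Prod.ext ?_ ?_
    · exact (sprod_absorb_at hA P hn s hs i).symm
    · show (pprodN x (i:ℕ))⁻¹ * pprodN x ((i:ℕ)+1) = (s i).2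
      have := tup_snd P x a i
      rw [tup_apply hA P hDn i] at this
      exact this
end Aux6
section Aux7
variable {G A : Type*} [Group G] [InverseSemigroup A]

open InverseSemigroup

theorem Dn_ideal (P : PAct G A) {n : ℕ} {x : Fin n → G} {a : A} (ha : a ∈ Dn P x) (s : A) :
    s * a ∈ Dn P x ∧ a * s ∈ Dn P x := by
  constructor <;>
  · apply Set.mem_iInter.2
    intro i
    have := Set.mem_iInter.1 ha i
    first
    | exact (P.D_ideal _ s _ this).1
    | exact (P.D_ideal _ s _ this).2

theorem M1 (hA : ∀ a b : A, a * b = b * a) (P : PAct G A) {n : ℕ}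
    {wl wr wil wir : (Fin n → G) → A → A} (hw : IsPC P wl wr wil wir)
    {x : Fin n → G} {E : A} (hE : E ∈ Dn P x) (hEi : IsIdem E) :
    wr x E * (wr x E)⁻¹ = E := by
  obtain ⟨hmem, hmul, hinv⟩ := hw x
  set u := wr x E with hudef
  have hu : u ∈ Dn P x := (hmem E hE).2.1
  have h1 : u = E * u := by
    have := (hmul E hE E hE).2.1
    rwa [hEi] at this
  have huu : u * u⁻¹ ∈ Dn P x := (Dn_ideal P hu u⁻¹).2
  have h3 : wir x u = E := (hinv E hE).2.2.2
  have h2 : E = u * u⁻¹ * E := by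
    calc E = wir x u := h3.symm
    _ = wir x (u * u⁻¹ * u) := by rw [mul_inv_mul]
    _ = (u * u⁻¹) * wir x u := (hmul _ huu _ hu).2.2.2.2.1
    _ = u * u⁻¹ * E := by rw [h3]
  have h5 : u * u⁻¹ = E * (u * u⁻¹) := by
    have := congrArg (· * u⁻¹) h1
    simpa [mul_assoc] using this
  calc u * u⁻¹ = E * (u * u⁻¹) := h5
  _ = (u * u⁻¹) * E := hA _ _
  _ = E := h2.symm

theorem M2 (hA : ∀ a b : A, a * b = b * a) (P : PAct G A) {n : ℕ}
    {wl wr wil wir : (Fin n → G) → A → A} (hw : IsPC P wl wr wil wir)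
    {x : Fin n → G} {a : A} (ha : a ∈ Dn P x) :
    wr x (a * a⁻¹) * a = wr x a := by
  letI : Std.Commutative (α := A) (·*·) := ⟨hA⟩
  letI : Std.Associative (α := A) (·*·) := ⟨mul_assoc⟩
  obtain ⟨hmem, hmul, hinv⟩ := hw x
  have haa : a * (a * a⁻¹) = a := by
    have h : a * (a * a⁻¹) = a * a⁻¹ * a := by ac_rfl
    rw [h, mul_inv_mul]
  have haaD : a * a⁻¹ ∈ Dn P x := (Dn_ideal P ha a⁻¹).2
  have := (hmul a ha (a * a⁻¹) haaD).2.1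
  rw [haa] at this
  rw [this, hA]

theorem M3 (hA : ∀ a b : A, a * b = b * a) (P : PAct G A) {n : ℕ}
    {wl wr wil wir wl' wr' wil' wir' : (Fin n → G) → A → A}
    (hw : IsPC P wl wr wil wir) (hw' : IsPC P wl' wr' wil' wir')
    {x : Fin n → G} {E : A} (hE : E ∈ Dn P x) (hEi : IsIdem E) :
    wr' x (wr x E) = wr x E * wr' x E := by
  obtain ⟨hmem, hmul, hinv⟩ := hw x
  obtain ⟨hmem', hmul', hinv'⟩ := hw' x
  have hu : wr x E ∈ Dn P x := (hmem E hE).2.1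
  have h1 : wr x E = wr x E * E := by
    have h := (hmul E hE E hE).2.1
    rw [hEi] at h
    exact h.trans (hA E (wr x E))
  have := (hmul' (wr x E) hu E hE).2.1
  rw [← h1] at this
  exact this

theorem forall₂_ofFn {α β : Type*} {R : α → β → Prop} :
    ∀ {k : ℕ} (f : Fin k → α) (g : Fin k → β), (∀ i, R (f i) (g i)) →
      List.Forall₂ R (List.ofFn f) (List.ofFn g) := by
  intro k
  induction k with
  | zero => intro f g h; simp
  | succ k ih =>
    intro f g h
    rw [List.ofFn_succ, List.ofFn_succ]
    exact List.Forall₂.cons (h 0) (ih _ _ (fun i => h i.succ))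

theorem sprod_eq_lfold (P : PAct G A) {m : ℕ} (hn : 0 < m + 1) (s : Fin (m + 1) → A × G) :
    sprod P hn s = lfold P (s 0) (List.ofFn (fun i : Fin m => s i.succ)) := by
  show List.foldl (smul P) _ _ = _
  rw [List.ofFn_succ (f := s)]
  rfl
end Aux7
open InverseSemigroup in
/-- For `n ≥ 1`, the map sending a partial `n`-cochain `w ∈ Cⁿ(G,A)` to
`f(s₁,…,sₙ) = α(s₁⋯sₙ sₙ⁻¹⋯s₁⁻¹) w(κ(s₁),…,κ(sₙ))` is an isomorphism of
abelian groups `Cⁿ(G,A) ≅ Cⁿ_≤(S¹,A¹)`: it takes values in `Cⁿ_≤(S¹,A¹)`, is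
multiplicative, and has the explicit inverse
`w(x₁,…,xₙ) a = f(s₁, s₁⁻¹s₂, …, s_{n-1}⁻¹sₙ) a`, where `sᵢ = a a⁻¹ δ_{x₁⋯xᵢ}`. -/
theorem stmt19 {G A : Type*} [Group G] [InverseSemigroup A]
    (hA : ∀ a b : A, a * b = b * a) (P : PAct G A) (n : ℕ) (hn : 0 < n) :
    -- the map lands in `Cⁿ_≤(S¹,A¹)`
    (∀ wl wr wil wir : (Fin n → G) → A → A, IsPC P wl wr wil wir →
      IsOC P hn (fun s => wr (fun i => (s i).2) ((sprod P hn s).1))) ∧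
    -- the map is multiplicative (composition of multipliers ↦ pointwise product)
    (∀ wl wr wil wir wl' wr' wil' wir' : (Fin n → G) → A → A,
      IsPC P wl wr wil wir → IsPC P wl' wr' wil' wir' →
      ∀ s : Fin n → A × G, (∀ i, SC P (s i)) →
        wr' (fun i => (s i).2) (wr (fun i => (s i).2) ((sprod P hn s).1))
          = wr (fun i => (s i).2) ((sprod P hn s).1) *
            wr' (fun i => (s i).2) ((sprod P hn s).1)) ∧
    -- surjectivity, with the explicit inverse formula
    (∀ f : (Fin n → A × G) → A, IsOC P hn f →
      IsPC P (fun x a => f (tup P x a) * a) (fun x a => f (tup P x a) * a)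
        (fun x a => (f (tup P x a))⁻¹ * a) (fun x a => (f (tup P x a))⁻¹ * a) ∧
      (∀ s : Fin n → A × G, (∀ i, SC P (s i)) →
        f (tup P (fun i => (s i).2) ((sprod P hn s).1)) * (sprod P hn s).1
          = f s)) ∧
    -- injectivity: the explicit inverse formula recovers `w`
    (∀ wl wr wil wir : (Fin n → G) → A → A, IsPC P wl wr wil wir →
      ∀ x : Fin n → G, ∀ a ∈ Dn P x,
        wr (fun i => ((tup P x a i).2)) ((sprod P hn (tup P x a)).1) * a
          = wr x a) := by
  letI : Std.Commutative (α := A) (·*·) := ⟨hA⟩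
  letI : Std.Associative (α := A) (·*·) := ⟨mul_assoc⟩
  obtain ⟨m, rfl⟩ : ∃ m, n = m + 1 := ⟨n - 1, by omega⟩
  refine ⟨?_, ?_, ?_, ?_⟩
  · -- Part 1
    intro wl wr wil wir hw s hs
    obtain ⟨hSC, -, -, -, hDn⟩ := sprod_spec hA P hn s hs
    refine ⟨?_, ?_⟩
    · rw [smul_sinv_self hA P hSC]
      exact M1 hA P hw hDn hSC.2
    · intro t ht hle
      obtain ⟨htSC, -, -, -, htDn⟩ := sprod_spec hA P hn t ht
      have hR : ∀ i, (s i).2 = (t i).2 ∧ (s i).1 = (s i).1 * (t i).1 := by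
        intro i
        obtain ⟨r, hrSC, hrid, hre⟩ := hle i
        have hr2 : r.2 = 1 := mul_eq_right.mp (congrArg Prod.snd hrid)
        have hr : r = (r.1, (1:G)) := Prod.ext rfl hr2
        rw [hr, smul_one_left] at hre
        refine ⟨by rw [hre], ?_⟩
        rw [hre]
        show r.1 * (t i).1 = r.1 * (t i).1 * (t i).1
        rw [mul_assoc, (ht i).2]
      have hx : (fun i => (s i).2) = (fun i => (t i).2) := funext fun i => (hR i).1
      have hfold := lfold_R hA P (hs 0) (ht 0) (hR 0).1 (hR 0).2
        (forall₂_ofFn _ _ (fun i => ⟨hs i.succ, ht i.succ, (hR i.succ).1, (hR i.succ).2⟩))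
      have hEabs : (sprod P hn s).1 = (sprod P hn s).1 * (sprod P hn t).1 := by
        rw [sprod_eq_lfold P hn s, sprod_eq_lfold P hn t]
        exact hfold.2
      refine ⟨(sprod P hn s).1, hSC.2, ?_⟩
      obtain ⟨hmem, hmul, hinv⟩ := hw (fun i => (s i).2)
      have hDnt : (sprod P hn t).1 ∈ Dn P (fun i => (s i).2) := by rw [hx]; exact htDn
      have hkey := (hmul _ hDn _ hDnt).2.1
      rw [← hEabs] at hkey
      show wr (fun i => (s i).2) ((sprod P hn s).1)
          = (sprod P hn s).1 * wr (fun i => (t i).2) ((sprod P hn t).1)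
      rw [← hx]
      exact hkey
  · -- Part 2
    intro wl wr wil wir wl' wr' wil' wir' hw hw' s hs
    obtain ⟨hSC, -, -, -, hDn⟩ := sprod_spec hA P hn s hs
    exact M3 hA P hw hw' hDn hSC.2
  · -- Part 3
    intro f hf
    have dagger : ∀ (x : Fin (m+1) → G), ∀ a ∈ Dn P x,
        f (tup P x a) * (f (tup P x a))⁻¹ = a * a⁻¹ := by
      intro x a ha
      have h1 := (hf (tup P x a) (tup_SC hA P ha)).1
      rw [sprod_tup hA P hn ha,
        smul_sinv_self hA P ⟨mem_pprod_of_Dn P ha (m+1), idem_mul_inv a⟩] at h1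
      exact h1
    constructor
    · -- IsPC
      intro x
      have hK : ∀ a ∈ Dn P x, ∀ b ∈ Dn P x,
          f (tup P x (a*b)) = f (tup P x a) * (a*b*(a*b)⁻¹) := by
        intro a ha b hb
        have hab : a * b ∈ Dn P x := (Dn_ideal P hb a).1
        have hle : ∀ i, SNatLe P (tup P x (a*b) i) (tup P x a i) := by
          intro i
          refine ⟨(P.θ (pprodN x (i:ℕ))⁻¹ (a*b*(a*b)⁻¹), 1),
            ⟨by rw [P.D_one]; trivial,
              theta_idem P (by rw [inv_inv]; exact mem_pprod_of_Dn P hab _) (idem_mul_inv _)⟩,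
            ?_, ?_⟩
          · rw [smul_one_left]
            have hth : IsIdem (P.θ (pprodN x (i:ℕ))⁻¹ (a*b*(a*b)⁻¹)) :=
              theta_idem P (by rw [inv_inv]; exact mem_pprod_of_Dn P hab _) (idem_mul_inv _)
            rw [hth]
          · rw [smul_one_left, tup_apply hA P hab i, tup_apply hA P ha i]
            refine Prod.ext ?_ rfl
            show P.θ (pprodN x (i:ℕ))⁻¹ (a*b*(a*b)⁻¹)
              = P.θ (pprodN x (i:ℕ))⁻¹ (a*b*(a*b)⁻¹) * P.θ (pprodN x (i:ℕ))⁻¹ (a*a⁻¹)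
            rw [← P.θ_mul _ _ (by rw [inv_inv]; exact mem_pprod_of_Dn P hab _)
              _ (by rw [inv_inv]; exact mem_pprod_of_Dn P ha _)]
            congr 1
            rw [mul_invA hA a b]
            symm
            have h6 : a*b*(a⁻¹*b⁻¹)*(a*a⁻¹) = (a*a⁻¹*a)*(b*(a⁻¹*b⁻¹)) := by ac_rfl
            rw [h6, mul_inv_mul]
            ac_rfl
        obtain ⟨e', he', heq⟩ := (hf _ (tup_SC hA P hab)).2 _ (tup_SC hA P ha) hle
        have d1 := dagger x a ha
        have d2 := dagger x _ hab
        rw [heq, mul_invA hA, idem_invA he'] at d2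
        have d3 : e' * (a*a⁻¹) = a*b*(a*b)⁻¹ := by
          rw [← d2, ← d1]
          have h10 : e' * f (tup P x a) * (e' * (f (tup P x a))⁻¹)
              = e' * e' * (f (tup P x a) * (f (tup P x a))⁻¹) := by ac_rfl
          rw [h10, he']
        rw [heq, ← d3]
        have d4 : f (tup P x a) * (e' * (a*a⁻¹)) = e' * (f (tup P x a) * (a*a⁻¹)) := by ac_rfl
        rw [d4]
        have d5 : f (tup P x a) * (a*a⁻¹) = f (tup P x a) := by
          rw [← d1]
          have h7 : f (tup P x a) * (f (tup P x a) * (f (tup P x a))⁻¹)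
              = f (tup P x a) * (f (tup P x a))⁻¹ * f (tup P x a) := by ac_rfl
          rw [h7, mul_inv_mul]
        rw [d5]
      have hKi : ∀ a ∈ Dn P x, ∀ b ∈ Dn P x,
          (f (tup P x (a*b)))⁻¹ = (f (tup P x a))⁻¹ * (a*b*(a*b)⁻¹) := by
        intro a ha b hb
        rw [hK a ha b hb, mul_invA hA, idem_invA (idem_mul_inv (a*b))]
      refine ⟨?_, ?_, ?_⟩
      · intro a ha
        exact ⟨(Dn_ideal P ha _).1, (Dn_ideal P ha _).1, (Dn_ideal P ha _).1,
          (Dn_ideal P ha _).1⟩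
      · intro a ha b hb
        have hab : a * b ∈ Dn P x := (Dn_ideal P hb a).1
        have gen : ∀ F : A, F * (a*b*(a*b)⁻¹) * (a*b) = F * a * b := by
          intro F
          have h8 : F * (a*b*(a*b)⁻¹) * (a*b) = F * (a*b*(a*b)⁻¹*(a*b)) := by ac_rfl
          rw [h8, mul_inv_mul, ← mul_assoc]
        have gen' : ∀ F : A, F * (b*a*(b*a)⁻¹) * (b*a) = a * (F * b) := by
          intro F
          have h8 : F * (b*a*(b*a)⁻¹) * (b*a) = F * (b*a*(b*a)⁻¹*(b*a)) := by ac_rfl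
          rw [h8, mul_inv_mul]
          ac_rfl
        have hg1 : f (tup P x (a*b)) * (a*b) = f (tup P x a) * a * b := by
          rw [hK a ha b hb]; exact gen _
        have hg2 : f (tup P x (a*b)) * (a*b) = a * (f (tup P x b) * b) := by
          rw [hA a b, hK b hb a ha]; exact gen' _
        have hg4 : (f (tup P x (a*b)))⁻¹ * (a*b) = (f (tup P x a))⁻¹ * a * b := by
          rw [hKi a ha b hb]; exact gen _
        have hg5 : (f (tup P x (a*b)))⁻¹ * (a*b) = a * ((f (tup P x b))⁻¹ * b) := by
          rw [hA a b, hKi b hb a ha]; exact gen' _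
        exact ⟨hg1, hg2, hg2.symm.trans hg1, hg4, hg5, hg5.symm.trans hg4⟩
      · intro a ha
        have hc' : (f (tup P x a) * a) * (f (tup P x a) * a)⁻¹ = a * a⁻¹ := by
          rw [mul_invA hA]
          have h9 : f (tup P x a) * a * ((f (tup P x a))⁻¹ * a⁻¹)
              = (f (tup P x a) * (f (tup P x a))⁻¹) * (a * a⁻¹) := by ac_rfl
          rw [h9, dagger x a ha]
          exact idem_mul_inv a
        have hc : ((f (tup P x a))⁻¹ * a) * ((f (tup P x a))⁻¹ * a)⁻¹ = a * a⁻¹ := by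
          rw [mul_invA hA, inv_invA]
          have h9 : (f (tup P x a))⁻¹ * a * (f (tup P x a) * a⁻¹)
              = (f (tup P x a) * (f (tup P x a))⁻¹) * (a * a⁻¹) := by ac_rfl
          rw [h9, dagger x a ha]
          exact idem_mul_inv a
        have htupc' : tup P x (f (tup P x a) * a) = tup P x a := by
          funext i
          show smul P (sinv P (f (tup P x a) * a * (f (tup P x a) * a)⁻¹, pprodN x (i : ℕ)))
            (f (tup P x a) * a * (f (tup P x a) * a)⁻¹, pprodN x ((i : ℕ) + 1)) = _
          rw [hc']
          rfl
        have htupc : tup P x ((f (tup P x a))⁻¹ * a) = tup P x a := by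
          funext i
          show smul P (sinv P ((f (tup P x a))⁻¹ * a * ((f (tup P x a))⁻¹ * a)⁻¹, pprodN x (i : ℕ)))
            ((f (tup P x a))⁻¹ * a * ((f (tup P x a))⁻¹ * a)⁻¹, pprodN x ((i : ℕ) + 1)) = _
          rw [hc]
          rfl
        have G1 : f (tup P x ((f (tup P x a))⁻¹ * a)) * ((f (tup P x a))⁻¹ * a) = a := by
          rw [htupc, ← mul_assoc, dagger x a ha, mul_inv_mul]
        have G2 : (f (tup P x (f (tup P x a) * a)))⁻¹ * (f (tup P x a) * a) = a := by
          rw [htupc']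
          have h9 : (f (tup P x a))⁻¹ * (f (tup P x a) * a)
              = f (tup P x a) * (f (tup P x a))⁻¹ * a := by ac_rfl
          rw [h9, dagger x a ha, mul_inv_mul]
        exact ⟨G1, G2, G1, G2⟩
    · -- 3b
      intro s hs
      obtain ⟨hSC, -, -, -, hDn⟩ := sprod_spec hA P hn s hs
      have htupSC := tup_SC hA P hDn
      have hle := tup_le hA P hn s hs
      obtain ⟨e', he', heq⟩ := (hf _ htupSC).2 s hs hle
      have haidem : IsIdem ((sprod P hn s).1) := hSC.2
      have haa : (sprod P hn s).1 * ((sprod P hn s).1)⁻¹ = (sprod P hn s).1 := by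
        rw [idem_invA haidem]; exact haidem
      have h1 : f (tup P (fun i => (s i).2) ((sprod P hn s).1))
          * (f (tup P (fun i => (s i).2) ((sprod P hn s).1)))⁻¹ = (sprod P hn s).1 := by
        have h := (hf _ htupSC).1
        rw [sprod_tup hA P hn hDn,
          smul_sinv_self hA P ⟨mem_pprod_of_Dn P hDn (m+1), idem_mul_inv _⟩] at h
        exact h.trans haa
      have h2 : f s * (f s)⁻¹ = (sprod P hn s).1 := by
        have h := (hf s hs).1
        rw [smul_sinv_self hA P hSC] at h
        exact h
      have hfs : (sprod P hn s).1 * f s = f s := by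
        rw [← h2]; exact mul_inv_mul (f s)
      have he'a : e' * (sprod P hn s).1 = (sprod P hn s).1 := by
        have h3 : f (tup P (fun i => (s i).2) ((sprod P hn s).1))
            * (f (tup P (fun i => (s i).2) ((sprod P hn s).1)))⁻¹
            = e' * (f s * (f s)⁻¹) := by
          rw [heq, mul_invA hA, idem_invA he']
          have h10 : e' * f s * (e' * (f s)⁻¹) = e' * e' * (f s * (f s)⁻¹) := by ac_rfl
          rw [h10, he']
        rw [h1, h2] at h3
        exact h3.symm
      have hfeq : f (tup P (fun i => (s i).2) ((sprod P hn s).1)) = f s := by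
        rw [heq, ← hfs, ← mul_assoc, he'a]
      rw [hfeq, hA (f s), hfs]
  · -- Part 4
    intro wl wr wil wir hw x a ha
    have hxt : (fun i => (tup P x a i).2) = x := funext (tup_snd P x a)
    have hsp : (sprod P hn (tup P x a)).1 = a * a⁻¹ := by rw [sprod_tup hA P hn ha]
    rw [hxt, hsp]
    exact M2 hA P hw ha
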